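/- arXiv:1408.4421 — 2 statements merged into one kernel-verified Lean document; each statement's English description precedes it below -/
import Mathlib

section
/- Let c ≥ 0 be a real constant. If a univariate real polynomial f has all real roots, then (1 − cD)f = f − c·f′ also has all real roots. -/
/-!
If `f` has only real roots `rᵢ` and `z` is a non-real root of `f - c f'`, then `f z ≠ 0` and
`c f'(z) / f(z) = c ∑ 1 / (z - rᵢ) = 1`. Taking imaginary parts gives
`c · Im z · ∑ 1 / |z - rᵢ|² = 0`, impossible since `c ≠ 0`, `Im z ≠ 0` and the sum is positive.
-/

open Polynomial

/-- A real polynomial is real-rooted if it splits over `ℝ`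
(equivalently, all of its complex roots are real). -/
def RealRooted (p : Polynomial ℝ) : Prop := (p.map (RingHom.id ℝ)).Splits

theorem realRooted_iff_forall_im_eq_zero {p : ℝ[X]} :
    RealRooted p ↔ ∀ z ∈ (p.map (algebraMap ℝ ℂ)).roots, z.im = 0 := by
  rw [RealRooted, map_id]
  refine ⟨fun hp z hz => ?_, fun hp => ?_⟩
  · rw [hp.roots_map] at hz
    obtain ⟨r, -, rfl⟩ := Multiset.mem_map.1 hz
    exact Complex.ofReal_im r
  · refine Splits.of_splits_map (algebraMap ℝ ℂ) (IsAlgClosed.splits _) fun z hz => ⟨z.re, ?_⟩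
    exact Complex.ext (by simp) (by simp [hp z hz])

theorem Complex.im_sum_one_div_sub {s : Multiset ℂ} (hs : ∀ r ∈ s, r.im = 0) (z : ℂ) :
    (s.map fun r => 1 / (z - r)).sum.im =
      -z.im * (s.map fun r => (Complex.normSq (z - r))⁻¹).sum := by
  rw [← Multiset.sum_map_mul_left, ← Complex.coe_imAddGroupHom, map_multiset_sum,
    Multiset.map_map]
  refine congrArg Multiset.sum (Multiset.map_congr rfl fun r hr => ?_)
  simp [Complex.inv_im, hs r hr, div_eq_mul_inv]

theorem im_eq_zero_of_mem_roots_sub_smul_derivative {p : ℂ[X]} (hp : ∀ r ∈ p.roots, r.im = 0)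
    (c : ℝ) {z : ℂ} (hz : z ∈ (p - (c : ℂ) • derivative p).roots) : z.im = 0 := by
  by_contra hzi
  have hp0 : p ≠ 0 := by
    rintro rfl
    simp at hz
  have hz_ne : ∀ r ∈ p.roots, z - r ≠ 0 := fun r hr h => hzi <| by
    rw [sub_eq_zero.1 h, hp r hr]
  have hpz : p.eval z ≠ 0 := fun h =>
    hz_ne z ((mem_roots hp0).2 h) (sub_self z)
  set w := (p.roots.map fun r => 1 / (z - r)).sum
  have hw : (c : ℂ) * w = 1 := by
    have hroot := (mem_roots'.1 hz).2
    rw [IsRoot, eval_sub, eval_smul, smul_eq_mul,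
      (IsAlgClosed.splits p).eval_derivative_eq_eval_mul_sum hpz] at hroot
    exact mul_left_cancel₀ hpz (by linear_combination -hroot)
  have hS : 0 < (p.roots.map fun r => (Complex.normSq (z - r))⁻¹).sum := by
    have hne : p.roots ≠ ∅ := by
      rintro h
      simp [w, h] at hw
    simpa using Multiset.sum_lt_sum_of_nonempty (f := fun _ => 0) hne
      fun r hr => inv_pos.2 (Complex.normSq_pos.2 (hz_ne r hr))
  have him := congrArg Complex.im hw
  rw [Complex.im_ofReal_mul, Complex.im_sum_one_div_sub hp, Complex.one_im] at him
  have hc : c ≠ 0 := by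
    rintro rfl
    simp at hw
  exact hzi (by simpa [hc, hS.ne'] using him)

theorem oneSubCD_preserves_real_rooted_general (c : ℝ)
    (f : Polynomial ℝ) (hf : RealRooted f) :
    RealRooted (f - c • Polynomial.derivative f) := by
  rw [realRooted_iff_forall_im_eq_zero] at hf ⊢
  intro z hz
  refine im_eq_zero_of_mem_roots_sub_smul_derivative hf c ?_
  simpa [Polynomial.map_sub, derivative_map, smul_eq_C_mul] using hz

/-- **`(1 - cD)` preserves real-rootedness.**
For `c ≥ 0`, if the real polynomial `f` has all real roots, then so does
`(1 - cD) f = f - c f'`. -/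
theorem oneSubCD_preserves_real_rooted (c : ℝ) (hc : 0 ≤ c)
    (f : Polynomial ℝ) (hf : RealRooted f) :
    RealRooted (f - c • Polynomial.derivative f) :=
  oneSubCD_preserves_real_rooted_general c f hf
end

section
/- Let r_1, …, r_m be independent random column vectors in ℂ^d, each taking finitely many values (say r_i takes value w_{i,j} ∈ ℂ^d with probability p_{i,j} > 0, ∑_j p_{i,j} = 1), and let A_i = E[r_i r_i*] = ∑_j p_{i,j} w_{i,j} w_{i,j}*. Then the expected characteristic polynomial satisfies ∑_{j_1,…,j_m} (∏_i p_{i,j_i}) det(xI − ∑_i w_{i,j_i} w_{i,j_i}*) = (∏_{i=1}^m (1 − ∂_{z_i})) det(xI + ∑_{i=1}^m z_i A_i) evaluated at z_1 = … = z_m = 0. -/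
open Polynomial Matrix

/-- The rank-one outer product `v v*`. -/
noncomputable def outer {d : ℕ} (v : Fin d → ℂ) : Matrix (Fin d) (Fin d) ℂ :=
  Matrix.vecMulVec v (star v)

/-- The multivariate polynomial `det(x I + ∑ i, z i • A i)`, in the variables
`none = x` and `some i = z i`. -/
noncomputable def detPoly {d m : ℕ} (A : Fin m → Matrix (Fin d) (Fin d) ℂ) :
    MvPolynomial (Option (Fin m)) ℂ :=
  ((MvPolynomial.X (none : Option (Fin m)) : MvPolynomial (Option (Fin m)) ℂ) •
      (1 : Matrix (Fin d) (Fin d) (MvPolynomial (Option (Fin m)) ℂ)) +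
    ∑ i : Fin m, (MvPolynomial.X (some i) : MvPolynomial (Option (Fin m)) ℂ) •
      (A i).map MvPolynomial.C).det

/-- The differential operator `∏ i (1 - ∂_{z i})`. -/
noncomputable def mixedOp (m : ℕ) :
    Module.End ℂ (MvPolynomial (Option (Fin m)) ℂ) :=
  (List.ofFn (fun i : Fin m =>
    (1 : Module.End ℂ (MvPolynomial (Option (Fin m)) ℂ)) -
      (MvPolynomial.pderiv (some i)).toLinearMap)).prod

/-- The mixed characteristic polynomial
`μ[A₁,…,A_m](x) = ∏ i (1 - ∂_{z i}) det(xI + ∑ i z i A i) |_{z=0}`,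
obtained by substituting `x ↦ X` and `z i ↦ 0`. -/
noncomputable def mixedCharPoly {d m : ℕ}
    (A : Fin m → Matrix (Fin d) (Fin d) ℂ) : Polynomial ℂ :=
  MvPolynomial.aeval (fun o : Option (Fin m) =>
      match o with
      | none => (Polynomial.X : Polynomial ℂ)
      | some _ => (0 : Polynomial ℂ))
    (mixedOp m (detPoly A))

/-!
Give every value `w i a` its own variable `y i a` and expand
`det (x I + ∑ y i a • w i a (w i a)*)` multilinearly in the rows: it is a sum over the ways `g`
of assigning to each row either `x` (the identity row) or one pair `⟨i, a⟩`, of the monomial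
`∏ k, y (g k)` times a scalar determinant. Both sides of the theorem are specializations of this
expansion: the expected characteristic polynomial substitutes `y i a ↦ -[j i = a]` and averages
over `j`, the mixed characteristic polynomial substitutes `y i a ↦ p i a • z i` and then applies
`∏ i (1 - ∂_{z i})` at `z = 0`.

An assignment that uses the same pair twice has two proportional rows, so it contributes nothing.
For every other assignment both specializations factor over `i`, and the factor of `i` depends
only on the number `n` of rows assigned to values of `rᵢ`: it is `1`, `-p i a` or `0` according as
`n = 0`, `n = 1` or `n ≥ 2`. On the probabilistic side this is because `rᵢ` takes one value at a
time; on the differential side because `(1 - d/dz) z ^ n` vanishes at `z = 0` for `n ≥ 2`.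
-/

namespace MixedCharPoly

open Finset

theorem det_sum_smul_map {n ι R S : Type*} [Fintype n] [DecidableEq n] [Fintype ι]
    [CommRing R] [CommRing S] (f : R →+* S) (c : ι → S) (B : ι → Matrix n n R) :
    det (∑ o, c o • (B o).map f) =
      ∑ g : n → ι, (∏ k, c (g k)) * f (det (of fun k => B (g k) k)) := by
  have hrows : (∑ o, c o • (B o).map f) = of fun k => ∑ o, c o • (B o).map f k := by
    ext k l
    simp [Matrix.sum_apply, Finset.sum_apply]
  rw [hrows]
  change (detRowAlternating (R := S) (n := n)).toMultilinearMap
    (fun k => ∑ o, c o • (B o).map f k) = _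
  rw [MultilinearMap.map_sum]
  refine sum_congr rfl fun g _ => ?_
  rw [MultilinearMap.map_smul_univ, smul_eq_mul, f.map_det]
  rfl

theorem det_eq_zero_of_rows_smul {n R : Type*} [Fintype n] [DecidableEq n] [CommRing R]
    {M : Matrix n n R} {k k' : n} (hkk' : k ≠ k') {v : n → R} {a b : R}
    (hk : M k = a • v) (hk' : M k' = b • v) : M.det = 0 := by
  have hrow : (M.updateRow k' v) k = a • v := by
    rw [updateRow_ne hkk', hk]
  calc M.det = b * (M.updateRow k' v).det := by
        rw [← det_updateRow_smul, ← hk', updateRow_eq_self]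
    _ = b * (a * ((M.updateRow k' v).updateRow k v).det) := by
        rw [← det_updateRow_smul (M.updateRow k' v), ← hrow, updateRow_eq_self]
    _ = 0 := by
        rw [det_zero_of_row_eq hkk' (by simp [updateRow_ne hkk'.symm]), mul_zero, mul_zero]

/-- `(1 - d/dz) z ^ n` at `z = 0`. -/
def oneSubDerivAtZero (n : ℕ) : ℂ := 0 ^ n - n * 0 ^ (n - 1)

@[simp] theorem oneSubDerivAtZero_zero : oneSubDerivAtZero 0 = 1 := by simp [oneSubDerivAtZero]

@[simp] theorem oneSubDerivAtZero_one : oneSubDerivAtZero 1 = -1 := by simp [oneSubDerivAtZero]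

@[simp] theorem oneSubDerivAtZero_add_two (n : ℕ) : oneSubDerivAtZero (n + 2) = 0 := by
  simp [oneSubDerivAtZero]

theorem sum_mul_prod_neg_indicator {α β κ : Type*} [Fintype α] [DecidableEq β]
    (q : α → ℂ) (hq : ∑ a, q a = 1) {e : α → β} (he : Function.Injective e)
    (π : β → ℂ) (hπ : ∀ a, π (e a) = q a) {K : Finset κ} {G : κ → β}
    (hG : Set.InjOn G K) (hGe : ∀ k ∈ K, G k ∈ Set.range e) :
    ∑ a, q a * ∏ k ∈ K, -(if G k = e a then 1 else 0) =
      oneSubDerivAtZero #K * ∏ k ∈ K, π (G k) := by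
  obtain hK | hK | hK : #K = 0 ∨ #K = 1 ∨ 1 < #K := by omega
  · simp [card_eq_zero.mp hK, hq]
  · obtain ⟨k, rfl⟩ := card_eq_one.mp hK
    obtain ⟨a₀, ha₀⟩ := hGe k (mem_singleton_self k)
    simp only [prod_singleton, ← ha₀]
    rw [sum_eq_single a₀ (fun a _ ha => by rw [if_neg (he.ne ha.symm), neg_zero, mul_zero])
      (by simp), if_pos rfl, card_singleton, oneSubDerivAtZero_one, hπ]
    ring
  · obtain ⟨k, hk, k', hk', hkk'⟩ := one_lt_card.mp hK
    obtain ⟨n, hn⟩ : ∃ n, #K = n + 2 := ⟨#K - 2, by omega⟩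
    rw [hn, oneSubDerivAtZero_add_two, zero_mul]
    refine sum_eq_zero fun a _ => mul_eq_zero_of_right _ ?_
    by_cases hka : G k = e a
    · refine prod_eq_zero hk' ?_
      rw [if_neg fun h => hkk' (hG hk hk' (hka.trans h.symm)), neg_zero]
    · exact prod_eq_zero hk (by rw [if_neg hka, neg_zero])

section MixedEval

variable {m : ℕ}

noncomputable def zeroSubst (m : ℕ) : Option (Fin m) → ℂ[X] := fun o => o.elim X 0

noncomputable def mixedEval (m : ℕ) : MvPolynomial (Option (Fin m)) ℂ →ₗ[ℂ] ℂ[X] :=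
  (MvPolynomial.aeval (zeroSubst m)).toLinearMap ∘ₗ mixedOp m

theorem mixedCharPoly_eq_mixedEval {d : ℕ} (A : Fin m → Matrix (Fin d) (Fin d) ℂ) :
    mixedCharPoly A = mixedEval m (detPoly A) := by
  change MvPolynomial.aeval _ _ = MvPolynomial.aeval (zeroSubst m) _
  congr 2
  funext o
  cases o <;> rfl

noncomputable def oneSubPderiv (m : ℕ) (i : Fin m) :
    Module.End ℂ (MvPolynomial (Option (Fin m)) ℂ) :=
  1 - (MvPolynomial.pderiv (some i)).toLinearMap

theorem mixedOp_eq_prod_oneSubPderiv :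
    mixedOp m = ((List.finRange m).map (oneSubPderiv m)).prod := by
  rw [mixedOp, List.ofFn_eq_map]
  rfl

theorem oneSubPderiv_monomial (i : Fin m) (s : Option (Fin m) →₀ ℕ) (c : ℂ) :
    oneSubPderiv m i (MvPolynomial.monomial s c) = MvPolynomial.monomial s c -
      MvPolynomial.monomial (s - Finsupp.single (some i) 1) (c * s (some i)) := by
  simp [oneSubPderiv]

theorem aeval_zeroSubst_monomial (s : Option (Fin m) →₀ ℕ) (c : ℂ) :
    MvPolynomial.aeval (zeroSubst m) (MvPolynomial.monomial s c) =
      (c * ∏ i, (0 : ℂ) ^ s (some i)) • X ^ s none := by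
  rw [MvPolynomial.aeval_monomial, Finsupp.prod_fintype _ _ (fun _ => pow_zero _),
    Fintype.prod_option]
  simp [zeroSubst, Polynomial.smul_eq_C_mul, mul_comm, mul_left_comm]

theorem aeval_prod_oneSubPderiv_monomial {l : List (Fin m)} (hl : l.Nodup)
    (s : Option (Fin m) →₀ ℕ) (c : ℂ) :
    MvPolynomial.aeval (zeroSubst m)
        ((l.map (oneSubPderiv m)).prod (MvPolynomial.monomial s c)) =
      (c * ∏ i, if i ∈ l then oneSubDerivAtZero (s (some i)) else 0 ^ s (some i)) •
        X ^ s none := by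
  -- Reverse induction, so that the new factor `oneSubPderiv m i` acts first, on the monomial.
  induction l using List.reverseRecOn generalizing s c with
  | nil => simpa using aeval_zeroSubst_monomial s c
  | append_singleton l i ih =>
    obtain ⟨hl, -, hdisj⟩ := List.nodup_append.mp hl
    have hil : i ∉ l := fun h => hdisj i h i (List.mem_singleton_self i) rfl
    rw [List.map_append, List.prod_append, List.map_singleton, List.prod_singleton,
      Module.End.mul_apply, oneSubPderiv_monomial, map_sub, map_sub, ih hl, ih hl]
    have hrest : ∀ (t : Option (Fin m) →₀ ℕ) (l' : List (Fin m)),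
        (∀ x ≠ i, t (some x) = s (some x)) → (∀ x ≠ i, x ∈ l' ↔ x ∈ l) →
        ∏ x ∈ univ.erase i, (if x ∈ l' then oneSubDerivAtZero (t (some x)) else 0 ^ t (some x)) =
          ∏ x ∈ univ.erase i, (if x ∈ l then oneSubDerivAtZero (s (some x))
            else 0 ^ s (some x)) := by
      intro t l' ht hl'
      refine prod_congr rfl fun x hx => ?_
      rw [ht x (ne_of_mem_erase hx), if_congr (hl' x (ne_of_mem_erase hx)) rfl rfl]
    rw [← mul_prod_erase _ _ (mem_univ i), ← mul_prod_erase _ _ (mem_univ i),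
      ← mul_prod_erase _ _ (mem_univ i), hrest (s - Finsupp.single (some i) 1) l
        (fun x hx => by simp [hx]) (fun _ _ => Iff.rfl),
      hrest s (l ++ [i]) (fun _ _ => rfl) (fun x hx => by simp [hx])]
    simp only [Finsupp.tsub_apply, Finsupp.single_eq_same, Finsupp.single_apply,
      reduceCtorEq, if_false, tsub_zero, if_neg hil, List.mem_append, List.mem_singleton,
      or_true, if_true, oneSubDerivAtZero]
    module

theorem mixedEval_monomial (s : Option (Fin m) →₀ ℕ) (c : ℂ) :
    mixedEval m (MvPolynomial.monomial s c) =
      (c * ∏ i, oneSubDerivAtZero (s (some i))) • X ^ s none := by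
  simpa [mixedEval, mixedOp_eq_prod_oneSubPderiv] using
    aeval_prod_oneSubPderiv_monomial (List.nodup_finRange m) s c

end MixedEval

section RowExpansion

variable {d m : ℕ} {N : Fin m → ℕ}

/-- `o : Option ((i : Fin m) × Fin (N i))` stands for the variable `x` (`none`) or `y i a`
(`some ⟨i, a⟩`); `termMatrix w o` is the matrix it multiplies. -/
noncomputable def termMatrix (w : (i : Fin m) → Fin (N i) → (Fin d → ℂ)) :
    Option ((i : Fin m) × Fin (N i)) → Matrix (Fin d) (Fin d) ℂ :=
  fun o => o.elim 1 fun t => outer (w t.1 t.2)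

noncomputable def optWeight (p : (i : Fin m) → Fin (N i) → ℝ) :
    Option ((i : Fin m) × Fin (N i)) → ℂ :=
  fun o => o.elim 1 fun t => (p t.1 t.2 : ℂ)

/-- The substitution `x ↦ x`, `y i a ↦ p i a • z i`. -/
noncomputable def weightedVar (p : (i : Fin m) → Fin (N i) → ℝ)
    (o : Option ((i : Fin m) × Fin (N i))) : MvPolynomial (Option (Fin m)) ℂ :=
  MvPolynomial.monomial (Finsupp.single (o.map Sigma.fst) 1) (optWeight p o)

/-- The substitution `x ↦ X`, `y i a ↦ -[j i = a]`. -/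
noncomputable def choiceVar (j : (i : Fin m) → Fin (N i))
    (o : Option ((i : Fin m) × Fin (N i))) : ℂ[X] :=
  o.elim X fun t => -(if j t.1 = t.2 then 1 else 0)

variable (w : (i : Fin m) → Fin (N i) → (Fin d → ℂ)) (p : (i : Fin m) → Fin (N i) → ℝ)

theorem detPoly_eq_sum :
    detPoly (fun i => ∑ a, p i a • outer (w i a)) =
      ∑ g : Fin d → Option ((i : Fin m) × Fin (N i)),
        (∏ k, weightedVar p (g k)) *
          MvPolynomial.C (det (of fun k => termMatrix w (g k) k)) := by
  rw [detPoly, ← det_sum_smul_map]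
  congr 1
  refine Matrix.ext fun k l => ?_
  simp [Fintype.sum_option, Fintype.sum_sigma, weightedVar, optWeight, termMatrix,
    Matrix.sum_apply, Finset.mul_sum, ← MvPolynomial.C_mul_X_eq_monomial, mul_comm,
    mul_left_comm, Matrix.one_apply, apply_ite MvPolynomial.C]

theorem charpoly_sum_outer_eq_sum (j : (i : Fin m) → Fin (N i)) :
    (∑ i, outer (w i (j i))).charpoly =
      ∑ g : Fin d → Option ((i : Fin m) × Fin (N i)),
        (∏ k, choiceVar j (g k)) * Polynomial.C (det (of fun k => termMatrix w (g k) k)) := by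
  rw [Matrix.charpoly, ← det_sum_smul_map]
  congr 1
  refine Matrix.ext fun k l => ?_
  simp [Fintype.sum_option, Fintype.sum_sigma, choiceVar, termMatrix, charmatrix_apply,
    Matrix.sum_apply, Matrix.one_apply, Matrix.diagonal_apply, sub_eq_add_neg]

theorem det_termMatrix_eq_zero {g : Fin d → Option ((i : Fin m) × Fin (N i))}
    (hg : ¬ Set.InjOn g {k | g k ≠ none}) : det (of fun k => termMatrix w (g k) k) = 0 := by
  simp only [Set.InjOn, Set.mem_ofPred_eq, not_forall] at hg
  obtain ⟨k, hk, k', -, hkk', hne⟩ := hg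
  obtain ⟨t, ht⟩ := Option.ne_none_iff_exists'.mp hk
  refine det_eq_zero_of_rows_smul hne (v := star (w t.1 t.2)) (a := w t.1 t.2 k)
    (b := w t.1 t.2 k') ?_ ?_ <;> ext l <;> simp [termMatrix, outer, ht, ← hkk', vecMulVec_apply]

theorem mixedEval_prod_weightedVar (g : Fin d → Option ((i : Fin m) × Fin (N i))) :
    mixedEval m (∏ k, weightedVar p (g k)) =
      ((∏ k, optWeight p (g k)) *
          ∏ i, oneSubDerivAtZero #{k | (g k).map Sigma.fst = some i}) •
        X ^ #{k | (g k).map Sigma.fst = none} := by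
  simp only [weightedVar]
  rw [← MvPolynomial.monomial_sum_prod, mixedEval_monomial]
  simp [Finsupp.finsetSum_apply, Finsupp.single_apply, Finset.sum_boole, eq_comm]

theorem prod_choiceVar (j : (i : Fin m) → Fin (N i))
    (g : Fin d → Option ((i : Fin m) × Fin (N i))) :
    ∏ k, choiceVar j (g k) = X ^ #{k | (g k).map Sigma.fst = none} *
      Polynomial.C (∏ i, ∏ k with (g k).map Sigma.fst = some i,
        -(if g k = some ⟨i, j i⟩ then 1 else 0)) := by
  rw [← prod_fiberwise univ (fun k => (g k).map Sigma.fst), Fintype.prod_option]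
  simp only [map_prod]
  congr 1
  · rw [← prod_const]
    refine prod_congr rfl fun k hk => ?_
    simp_all [choiceVar]
  · refine prod_congr rfl fun i _ => prod_congr rfl fun k hk => ?_
    obtain ⟨⟨i', a⟩, hka, rfl⟩ := Option.map_eq_some_iff.mp (mem_filter.mp hk).2
    simp [choiceVar, hka, eq_comm]

theorem sum_mul_prod_fiber_indicator {i : Fin m} (hpi : ∑ a, p i a = 1)
    {g : Fin d → Option ((i : Fin m) × Fin (N i))} (hg : Set.InjOn g {k | g k ≠ none}) :
    ∑ a, (p i a : ℂ) * ∏ k with (g k).map Sigma.fst = some i,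
        -(if g k = some ⟨i, a⟩ then 1 else 0) =
      oneSubDerivAtZero #{k | (g k).map Sigma.fst = some i} *
        ∏ k with (g k).map Sigma.fst = some i, optWeight p (g k) := by
  have hK : ∀ k ∈ ({k | (g k).map Sigma.fst = some i} : Finset (Fin d)),
      ∃ a, g k = some ⟨i, a⟩ := fun k hk => by
    obtain ⟨⟨i', a⟩, hka, rfl⟩ := Option.map_eq_some_iff.mp (mem_filter.mp hk).2
    exact ⟨a, hka⟩
  have he : Function.Injective
      fun a : Fin (N i) => (some ⟨i, a⟩ : Option ((i : Fin m) × Fin (N i))) :=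
    fun a b h => by simpa using h
  have hsub : (({k | (g k).map Sigma.fst = some i} : Finset (Fin d)) : Set (Fin d)) ⊆
      {k | g k ≠ none} :=
    fun k hk => by
      obtain ⟨a, ha⟩ := hK k hk
      simp [ha]
  exact sum_mul_prod_neg_indicator (fun a => (p i a : ℂ)) (by exact_mod_cast hpi) he
    (optWeight p) (fun _ => rfl) (hg.mono hsub) fun k hk => (hK k hk).imp fun _ => Eq.symm

theorem prod_fiber_optWeight (g : Fin d → Option ((i : Fin m) × Fin (N i))) :
    ∏ i, ∏ k with (g k).map Sigma.fst = some i, optWeight p (g k) = ∏ k, optWeight p (g k) := by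
  have hnone : ∏ k with (g k).map Sigma.fst = none, optWeight p (g k) = 1 :=
    prod_eq_one fun k hk => by simp_all [optWeight]
  rw [← prod_fiberwise univ (fun k => (g k).map Sigma.fst) (fun k => optWeight p (g k)),
    Fintype.prod_option, hnone, one_mul]

theorem sum_prod_choiceVar (hp1 : ∀ i, ∑ a, p i a = 1)
    {g : Fin d → Option ((i : Fin m) × Fin (N i))} (hg : Set.InjOn g {k | g k ≠ none}) :
    ∑ j : (i : Fin m) → Fin (N i), ((∏ i, p i (j i) : ℝ) : ℂ) • ∏ k, choiceVar j (g k) =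
      ((∏ k, optWeight p (g k)) *
          ∏ i, oneSubDerivAtZero #{k | (g k).map Sigma.fst = some i}) •
        X ^ #{k | (g k).map Sigma.fst = none} := by
  calc ∑ j : (i : Fin m) → Fin (N i), ((∏ i, p i (j i) : ℝ) : ℂ) • ∏ k, choiceVar j (g k)
      = (∑ j : (i : Fin m) → Fin (N i), ∏ i, ((p i (j i) : ℂ) *
          ∏ k with (g k).map Sigma.fst = some i, -(if g k = some ⟨i, j i⟩ then 1 else 0))) •
            X ^ #{k | (g k).map Sigma.fst = none} := by
        rw [sum_smul]
        refine sum_congr rfl fun j _ => ?_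
        rw [prod_choiceVar, prod_mul_distrib, Complex.ofReal_prod, Polynomial.smul_eq_C_mul,
          Polynomial.smul_eq_C_mul, map_mul]
        ring
    _ = (∏ i, ∑ a, (p i a : ℂ) *
          ∏ k with (g k).map Sigma.fst = some i, -(if g k = some ⟨i, a⟩ then 1 else 0)) •
            X ^ #{k | (g k).map Sigma.fst = none} := by
        rw [Fintype.prod_sum]
    _ = _ := by
        simp_rw [sum_mul_prod_fiber_indicator p (hp1 _) hg, prod_mul_distrib, prod_fiber_optWeight,
          mul_comm]

end RowExpansion

end MixedCharPoly

theorem expected_charpoly_eq_mixedCharPoly_general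
    {d m : ℕ} (N : Fin m → ℕ)
    (w : (i : Fin m) → Fin (N i) → (Fin d → ℂ))
    (p : (i : Fin m) → Fin (N i) → ℝ)
    (hp1 : ∀ i, ∑ j, p i j = 1) :
    ∑ j : (i : Fin m) → Fin (N i),
        ((∏ i, p i (j i) : ℝ) : ℂ) • (∑ i, outer (w i (j i))).charpoly
      = mixedCharPoly (fun i => ∑ j, p i j • outer (w i j)) := by
  open MixedCharPoly Finset in
  rw [mixedCharPoly_eq_mixedEval, detPoly_eq_sum, map_sum]
  simp_rw [charpoly_sum_outer_eq_sum, smul_sum]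
  rw [sum_comm]
  refine sum_congr rfl fun g _ => ?_
  by_cases hg : Set.InjOn g {k | g k ≠ none}
  · simp_rw [← smul_mul_assoc]
    rw [← sum_mul, sum_prod_choiceVar p hp1 hg, mul_comm _ (MvPolynomial.C _),
      ← MvPolynomial.smul_eq_C_mul, map_smul, mixedEval_prod_weightedVar]
    simp only [Polynomial.smul_eq_C_mul]
    ring
  · simp [det_termMatrix_eq_zero w hg]

/-- **Expected characteristic polynomials are mixed characteristic
polynomials.**  Let `r₁, …, r_m` be independent finitely supported random
vectors in `ℂ^d`, where `rᵢ` takes value `w i j` with probability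
`p i j > 0`, and let `Aᵢ = E[rᵢ rᵢ*]`.  Then
`E χ[∑ᵢ rᵢ rᵢ*](x) = ∏ᵢ (1 - ∂_{zᵢ}) det(xI + ∑ᵢ zᵢ Aᵢ) |_{z=0}`. -/
theorem expected_charpoly_eq_mixedCharPoly
    {d m : ℕ} (N : Fin m → ℕ) (hN : ∀ i, 0 < N i)
    (w : (i : Fin m) → Fin (N i) → (Fin d → ℂ))
    (p : (i : Fin m) → Fin (N i) → ℝ)
    (hp : ∀ i j, 0 < p i j) (hp1 : ∀ i, ∑ j, p i j = 1) :
    ∑ j : (i : Fin m) → Fin (N i),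
        ((∏ i, p i (j i) : ℝ) : ℂ) • (∑ i, outer (w i (j i))).charpoly
      = mixedCharPoly (fun i => ∑ j, p i j • outer (w i j)) :=
  expected_charpoly_eq_mixedCharPoly_general N w p hp1
end
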